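/- Hidden Markov model closure under equivariant coarse-graining (finite-horizon version): with the hypotheses of the previous statement (G-equivariant transition kernel P, G-equivariant emission kernel E, G-invariant initial distribution π on finite X, Y), define the joint law on trajectories p(x₀,…,x_{t+1}, y₀,…,y_t) = π(x₀) ∏_{τ=0}^{t} P(x_τ, x_{τ+1}) E(x_τ, y_τ). Let φ : X → X/G and ψ : Y → Y/G be the orbit maps. Then the pushforward law of the orbit trajectories (φ(x₀),…,φ(x_{t+1}), ψ(y₀),…,ψ(y_t)) factorizes as an HMM: it equals π̄(z₀) ∏_{τ=0}^{t} P̄(z_τ, z_{τ+1}) Ē(z_τ, v_τ), where π̄(z) = ∑_{x∈z} π(x), P̄(z, z') = ∑_{x'∈z'} P(x₀, x') for any representative x₀ ∈ z, and Ē(z, v) = ∑_{y∈v} E(x₀, y) for any representative x₀ ∈ z. -/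

import Mathlib

open scoped Classical
open Finset

section Aux

set_option linter.unusedSectionVars false

variable {G X Y : Type*} [Group G] [Fintype G] [Fintype X] [Fintype Y]
    [MulAction G X] [MulAction G Y]

lemma orbit_mk_smul (g : G) (y : Y) :
    Quotient.mk (MulAction.orbitRel G Y) (g • y) = Quotient.mk (MulAction.orbitRel G Y) y :=
  Quotient.sound ⟨g, rfl⟩

/-- Fiber sums of an equivariant kernel do not depend on the representative. -/
lemma fiber_sum_rep (F : X → Y → ℝ)
    (hF : ∀ (g : G) (x : X) (y : Y), F (g • x) (g • y) = F x y)
    (a b : X)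
    (hab : Quotient.mk (MulAction.orbitRel G X) a = Quotient.mk (MulAction.orbitRel G X) b)
    (v : Quotient (MulAction.orbitRel G Y)) :
    ∑ y ∈ univ.filter (fun y => Quotient.mk (MulAction.orbitRel G Y) y = v), F a y =
    ∑ y ∈ univ.filter (fun y => Quotient.mk (MulAction.orbitRel G Y) y = v), F b y := by
  obtain ⟨g, hg⟩ : a ∈ MulAction.orbit G b := Quotient.exact hab
  simp only [Finset.sum_filter]
  have h1 := Equiv.sum_comp (MulAction.toPerm g)
    (fun y : Y => if Quotient.mk (MulAction.orbitRel G Y) y = v then F a y else 0)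
  rw [← h1]
  refine Fintype.sum_congr _ _ (fun y => ?_)
  simp only [MulAction.toPerm_apply, orbit_mk_smul]
  have : F a (g • y) = F b y := by rw [← hg]; exact hF g b y
  rw [this]

end Aux

section Chain

set_option linter.unusedSectionVars false

variable {G X : Type*} [Group G] [Fintype G] [Fintype X] [MulAction G X]

lemma chain_sum (P : X → X → ℝ)
    (hP : ∀ (g : G) (x x' : X), P (g • x) (g • x') = P x x')
    (n : ℕ) (z : Fin (n + 1) → Quotient (MulAction.orbitRel G X)) (w : X → ℝ) :
    (∑ x : Fin (n + 1) → X,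
      if ∀ i, Quotient.mk (MulAction.orbitRel G X) (x i) = z i then
        w (x 0) * ∏ τ : Fin n, P (x τ.castSucc) (x τ.succ)
      else 0) =
    (∑ x₀ ∈ univ.filter (fun x₀ => Quotient.mk (MulAction.orbitRel G X) x₀ = z 0), w x₀) *
    ∏ τ : Fin n,
      ∑ x' ∈ univ.filter (fun x' => Quotient.mk (MulAction.orbitRel G X) x' = z τ.succ),
        P (z τ.castSucc).out x' := by
  induction n generalizing w with
  | zero =>
    simp only [Finset.univ_eq_empty, Finset.prod_empty, mul_one, Finset.sum_filter]
    rw [← Equiv.sum_comp (Equiv.funUnique (Fin 1) X).symm]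
    refine Fintype.sum_congr _ _ (fun a => ?_)
    simp [Fin.forall_fin_one, Equiv.funUnique]
  | succ n ih =>
    rw [← Equiv.sum_comp (Fin.consEquiv (fun _ : Fin (n + 2) => X)),
      Fintype.sum_prod_type]
    have step : ∀ a : X,
        (∑ x' : Fin (n + 1) → X,
          if ∀ i, Quotient.mk (MulAction.orbitRel G X)
              ((Fin.consEquiv (fun _ : Fin (n + 2) => X)) (a, x') i) = z i then
            w (((Fin.consEquiv (fun _ : Fin (n + 2) => X)) (a, x')) 0) *
              ∏ τ : Fin (n + 1),
                P (((Fin.consEquiv (fun _ : Fin (n + 2) => X)) (a, x')) τ.castSucc)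
                  (((Fin.consEquiv (fun _ : Fin (n + 2) => X)) (a, x')) τ.succ)
          else 0) =
        if Quotient.mk (MulAction.orbitRel G X) a = z 0 then
          w a * ((∑ x₁ ∈ univ.filter
              (fun x₁ => Quotient.mk (MulAction.orbitRel G X) x₁ = z 1), P (z 0).out x₁) *
            ∏ τ : Fin n,
              ∑ x' ∈ univ.filter
                  (fun x' => Quotient.mk (MulAction.orbitRel G X) x' = z τ.succ.succ),
                P (z τ.succ.castSucc).out x')
        else 0 := by
      intro a
      have hcond : ∀ x' : Fin (n + 1) → X,
          (∀ i, Quotient.mk (MulAction.orbitRel G X)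
              ((Fin.consEquiv (fun _ : Fin (n + 2) => X)) (a, x') i) = z i) ↔
          (Quotient.mk (MulAction.orbitRel G X) a = z 0 ∧
            ∀ i : Fin (n + 1), Quotient.mk (MulAction.orbitRel G X) (x' i) = z i.succ) := by
        intro x'
        rw [Fin.forall_fin_succ]
        simp [Fin.consEquiv]
      have hprod : ∀ x' : Fin (n + 1) → X,
          (∏ τ : Fin (n + 1),
            P (((Fin.consEquiv (fun _ : Fin (n + 2) => X)) (a, x')) τ.castSucc)
              (((Fin.consEquiv (fun _ : Fin (n + 2) => X)) (a, x')) τ.succ)) =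
          P a (x' 0) * ∏ τ : Fin n, P (x' τ.castSucc) (x' τ.succ) := by
        intro x'
        simp [Fin.prod_univ_succ, Fin.consEquiv, ← Fin.succ_castSucc]
      have h0 : ∀ x' : Fin (n + 1) → X,
          ((Fin.consEquiv (fun _ : Fin (n + 2) => X)) (a, x')) 0 = a := fun _ => rfl
      have hsum1 : ∀ x' : Fin (n + 1) → X,
          (if ∀ i, Quotient.mk (MulAction.orbitRel G X)
              ((Fin.consEquiv (fun _ : Fin (n + 2) => X)) (a, x') i) = z i then
            w (((Fin.consEquiv (fun _ : Fin (n + 2) => X)) (a, x')) 0) *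
              ∏ τ : Fin (n + 1),
                P (((Fin.consEquiv (fun _ : Fin (n + 2) => X)) (a, x')) τ.castSucc)
                  (((Fin.consEquiv (fun _ : Fin (n + 2) => X)) (a, x')) τ.succ)
          else 0) =
          (if Quotient.mk (MulAction.orbitRel G X) a = z 0 then
            w a * (if (∀ i : Fin (n + 1), Quotient.mk (MulAction.orbitRel G X) (x' i) = z i.succ)
              then P a (x' 0) * ∏ τ : Fin n, P (x' τ.castSucc) (x' τ.succ) else 0)
          else 0) := by
        intro x'
        rw [if_congr (hcond x') rfl rfl]
        by_cases hA : Quotient.mk (MulAction.orbitRel G X) a = z 0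
        · by_cases hB : ∀ i : Fin (n + 1), Quotient.mk (MulAction.orbitRel G X) (x' i) = z i.succ
          · rw [if_pos (show _ ∧ _ from ⟨hA, hB⟩), if_pos hA, if_pos hB, h0 x', hprod x']
          · simp [hA, hB]
        · simp [hA]
      simp only [hsum1]
      rw [Finset.sum_ite_irrel, Finset.sum_const_zero, ← Finset.mul_sum]
      by_cases ha : Quotient.mk (MulAction.orbitRel G X) a = z 0
      · rw [if_pos ha, if_pos ha]
        congr 1
        rw [ih (fun i => z i.succ) (P a)]
        congr 1
        · rw [fiber_sum_rep (G := G) P hP a (z 0).out (by rw [Quotient.out_eq]; exact ha)]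
          simp [Fin.succ_zero_eq_one]
          congr!
      · rw [if_neg ha, if_neg ha]
    simp only [step]
    rw [Fin.prod_univ_succ]
    have hfin : ∀ a : X,
        (if Quotient.mk (MulAction.orbitRel G X) a = z 0 then
          w a * ((∑ x₁ ∈ univ.filter
              (fun x₁ => Quotient.mk (MulAction.orbitRel G X) x₁ = z 1), P (z 0).out x₁) *
            ∏ τ : Fin n,
              ∑ x' ∈ univ.filter
                  (fun x' => Quotient.mk (MulAction.orbitRel G X) x' = z τ.succ.succ),
                P (z τ.succ.castSucc).out x')
        else 0) =
        (if Quotient.mk (MulAction.orbitRel G X) a = z 0 then w a else 0) *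
          ((∑ x₁ ∈ univ.filter
              (fun x₁ => Quotient.mk (MulAction.orbitRel G X) x₁ = z 1), P (z 0).out x₁) *
            ∏ τ : Fin n,
              ∑ x' ∈ univ.filter
                  (fun x' => Quotient.mk (MulAction.orbitRel G X) x' = z τ.succ.succ),
                P (z τ.succ.castSucc).out x') := by
      intro a; split_ifs <;> simp
    simp only [hfin]
    rw [← Finset.sum_mul, ← Finset.sum_filter]
    simp [Fin.succ_zero_eq_one]
    left; left; congr!

end Chain

/-- HMM closure under equivariant coarse-graining: the pushforward of the joint
trajectory law of an equivariant hidden Markov model through the orbit maps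
factorizes again as a hidden Markov model on the orbit spaces. -/
theorem equivariant_HMM_pushforward
    {G X Y : Type*} [Group G] [Fintype G] [Fintype X] [Fintype Y]
    [MulAction G X] [MulAction G Y]
    (P : X → X → ℝ) (E : X → Y → ℝ) (π : X → ℝ)
    (hPnn : ∀ x x', 0 ≤ P x x') (hPsum : ∀ x, ∑ x', P x x' = 1)
    (hEnn : ∀ x y, 0 ≤ E x y) (hEsum : ∀ x, ∑ y, E x y = 1)
    (hπnn : ∀ x, 0 ≤ π x) (hπsum : ∑ x, π x = 1)
    (hP : ∀ (g : G) (x x' : X), P (g • x) (g • x') = P x x')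
    (hE : ∀ (g : G) (x : X) (y : Y), E (g • x) (g • y) = E x y)
    (hπ : ∀ (g : G) (x : X), π (g • x) = π x)
    (t : ℕ)
    (z : Fin (t + 2) → Quotient (MulAction.orbitRel G X))
    (v : Fin (t + 1) → Quotient (MulAction.orbitRel G Y)) :
    (∑ x : Fin (t + 2) → X, ∑ y : Fin (t + 1) → Y,
      if (∀ τ, Quotient.mk (MulAction.orbitRel G X) (x τ) = z τ) ∧
         (∀ τ, Quotient.mk (MulAction.orbitRel G Y) (y τ) = v τ) then
        π (x 0) * ∏ τ : Fin (t + 1),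
          P (x τ.castSucc) (x τ.succ) * E (x τ.castSucc) (y τ)
      else 0) =
    (∑ x₀ ∈ Finset.univ.filter
        (fun x₀ => Quotient.mk (MulAction.orbitRel G X) x₀ = z 0), π x₀) *
    ∏ τ : Fin (t + 1),
      (∑ x' ∈ Finset.univ.filter
          (fun x' => Quotient.mk (MulAction.orbitRel G X) x' = z τ.succ),
        P (z τ.castSucc).out x') *
      (∑ y ∈ Finset.univ.filter
          (fun y => Quotient.mk (MulAction.orbitRel G Y) y = v τ),
        E (z τ.castSucc).out y) := by
  -- the constant emission factor on the quotient
  set CE : ℝ := ∏ τ : Fin (t + 1),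
      ∑ y ∈ Finset.univ.filter
          (fun y => Quotient.mk (MulAction.orbitRel G Y) y = v τ),
        E (z τ.castSucc).out y with hCE
  have key : ∀ x : Fin (t + 2) → X,
      (∑ y : Fin (t + 1) → Y,
        if (∀ τ, Quotient.mk (MulAction.orbitRel G X) (x τ) = z τ) ∧
           (∀ τ, Quotient.mk (MulAction.orbitRel G Y) (y τ) = v τ) then
          π (x 0) * ∏ τ : Fin (t + 1),
            P (x τ.castSucc) (x τ.succ) * E (x τ.castSucc) (y τ)
        else 0) =
      (if (∀ τ, Quotient.mk (MulAction.orbitRel G X) (x τ) = z τ) then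
        π (x 0) * ∏ τ : Fin (t + 1), P (x τ.castSucc) (x τ.succ)
      else 0) * CE := by
    intro x
    by_cases hA : ∀ τ, Quotient.mk (MulAction.orbitRel G X) (x τ) = z τ
    · rw [if_pos hA]
      have hsummand : ∀ y : Fin (t + 1) → Y,
          (if (∀ τ, Quotient.mk (MulAction.orbitRel G X) (x τ) = z τ) ∧
              (∀ τ, Quotient.mk (MulAction.orbitRel G Y) (y τ) = v τ) then
            π (x 0) * ∏ τ : Fin (t + 1),
              P (x τ.castSucc) (x τ.succ) * E (x τ.castSucc) (y τ)
          else 0) =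
          (π (x 0) * ∏ τ : Fin (t + 1), P (x τ.castSucc) (x τ.succ)) *
            (if (∀ τ, Quotient.mk (MulAction.orbitRel G Y) (y τ) = v τ) then
              ∏ τ : Fin (t + 1), E (x τ.castSucc) (y τ) else 0) := by
        intro y
        by_cases hB : ∀ τ, Quotient.mk (MulAction.orbitRel G Y) (y τ) = v τ
        · rw [if_pos ⟨hA, hB⟩, if_pos hB, Finset.prod_mul_distrib, mul_assoc]
        · rw [if_neg (fun h => hB h.2), if_neg hB, mul_zero]
      simp only [hsummand]
      rw [← Finset.mul_sum]
      congr 1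
      -- now compute the y-sum
      calc (∑ y : Fin (t + 1) → Y,
              if (∀ τ, Quotient.mk (MulAction.orbitRel G Y) (y τ) = v τ) then
                ∏ τ : Fin (t + 1), E (x τ.castSucc) (y τ) else 0)
          = ∑ y ∈ Fintype.piFinset (fun τ : Fin (t + 1) =>
              Finset.univ.filter
                (fun b => Quotient.mk (MulAction.orbitRel G Y) b = v τ)),
              ∏ τ : Fin (t + 1), E (x τ.castSucc) (y τ) := by
            rw [← Finset.sum_filter]
            refine (Finset.sum_congr ?_ (fun _ _ => rfl))
            ext y
            simp [Fintype.mem_piFinset]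
        _ = ∏ τ : Fin (t + 1),
              ∑ b ∈ Finset.univ.filter
                (fun b => Quotient.mk (MulAction.orbitRel G Y) b = v τ),
                E (x τ.castSucc) b := (Finset.prod_univ_sum _ _).symm
        _ = CE := by
            rw [hCE]
            refine Finset.prod_congr rfl (fun τ _ => ?_)
            exact fiber_sum_rep (G := G) E hE (x τ.castSucc) (z τ.castSucc).out
              (by rw [Quotient.out_eq]; exact hA τ.castSucc) (v τ)
    · rw [if_neg hA, zero_mul]
      refine Finset.sum_eq_zero (fun y _ => ?_)
      rw [if_neg (fun h => hA h.1)]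
  simp only [key]
  rw [← Finset.sum_mul]
  rw [chain_sum (G := G) P hP (t + 1) z π]
  rw [Finset.prod_mul_distrib]
  ring
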